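/- An oriented line (ξ, η) ∈ TP¹ passes through the point (z, t) ∈ ℂ ⊕ ℝ = ℝ³ (i.e., there exists r ∈ ℝ with Φ((ξ,η),r) = (z,t)) if and only if η = ½(z − 2tξ − z̄ξ²). -/

import Mathlib

open Complex ComplexConjugate

noncomputable section

/-- The z = x¹ + ix² coordinate of Φ((ξ,η),r). -/
def Phiz (ξ η : ℂ) (r : ℝ) : ℂ :=
  (2 * (η - conj η * ξ^2) + 2 * ξ * (1 + ξ * conj ξ) * (r : ℂ)) / (1 + ξ * conj ξ)^2

/-- The t = x³ coordinate of Φ((ξ,η),r). -/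
def Phit (ξ η : ℂ) (r : ℝ) : ℂ :=
  (-2 * (η * conj ξ + conj η * ξ) + (1 - ξ^2 * (conj ξ)^2) * (r : ℂ)) / (1 + ξ * conj ξ)^2

/-! The line (ξ, η) is r ↦ Φ((ξ,η),0) + r u with unit direction
u = (2ξ, 1 - |ξ|²) / (1 + |ξ|²), and Φ((ξ,η),0) is orthogonal to u. The combination
`lineEta ξ z t` of a point's coordinates does not change along u and returns η on the line;
conversely, the line with this η meets (z,t) at the parameter r = ⟨(z,t), u⟩. -/

def lineEta (ξ z t : ℂ) : ℂ := (z - 2 * t * ξ - conj z * ξ ^ 2) / 2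

def lineParam (ξ z : ℂ) (t : ℝ) : ℝ :=
  (2 * (z * conj ξ).re + t * (1 - normSq ξ)) / (1 + normSq ξ)

lemma one_add_mul_conj_ne_zero (ξ : ℂ) : 1 + ξ * conj ξ ≠ 0 := by
  rw [mul_conj]
  exact_mod_cast (add_pos_of_pos_of_nonneg one_pos (normSq_nonneg ξ)).ne'

lemma lineEta_Phiz_Phit (ξ η : ℂ) (r : ℝ) : lineEta ξ (Phiz ξ η r) (Phit ξ η r) = η := by
  have hc := pow_ne_zero 2 (one_add_mul_conj_ne_zero ξ)
  have hz : (1 + ξ * conj ξ) ^ 2 * Phiz ξ η r =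
      2 * (η - conj η * ξ ^ 2) + 2 * ξ * (1 + ξ * conj ξ) * r := by
    rw [Phiz, mul_div_cancel₀ _ hc]
  have ht : (1 + ξ * conj ξ) ^ 2 * Phit ξ η r =
      -2 * (η * conj ξ + conj η * ξ) + (1 - ξ ^ 2 * conj ξ ^ 2) * r := by
    rw [Phit, mul_div_cancel₀ _ hc]
  have hz' := congrArg conj hz
  simp only [map_add, map_sub, map_mul, map_pow, map_ofNat, map_one, conj_conj,
    conj_ofReal] at hz'
  apply mul_left_cancel₀ hc
  rw [lineEta]
  linear_combination (hz - 2 * ξ * ht - ξ ^ 2 * hz') / 2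

lemma one_add_mul_conj_mul_lineParam (ξ z : ℂ) (t : ℝ) :
    (1 + ξ * conj ξ) * (lineParam ξ z t : ℂ) =
      z * conj ξ + conj z * ξ + t * (1 - ξ * conj ξ) := by
  have hre : 2 * ((z * conj ξ).re : ℂ) = z * conj ξ + conj z * ξ := by
    rw [re_eq_add_conj, map_mul, conj_conj]
    ring
  have hc : 1 + ξ * conj ξ = ((1 + normSq ξ : ℝ) : ℂ) := by
    push_cast
    rw [mul_conj]
  rw [lineParam, ofReal_div, hc, mul_div_cancel₀ _ (hc ▸ one_add_mul_conj_ne_zero ξ)]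
  push_cast
  rw [← mul_conj]
  linear_combination hre

lemma Phiz_lineEta_lineParam (ξ z : ℂ) (t : ℝ) :
    Phiz ξ (lineEta ξ z t) (lineParam ξ z t) = z := by
  have hc := pow_ne_zero 2 (one_add_mul_conj_ne_zero ξ)
  have hr := one_add_mul_conj_mul_lineParam ξ z t
  rw [Phiz, div_eq_iff hc]
  simp only [lineEta, map_div₀, map_sub, map_mul, map_pow, map_ofNat, conj_conj,
    conj_ofReal]
  linear_combination 2 * ξ * hr

lemma Phit_lineEta_lineParam (ξ z : ℂ) (t : ℝ) :
    Phit ξ (lineEta ξ z t) (lineParam ξ z t) = t := by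
  have hc := pow_ne_zero 2 (one_add_mul_conj_ne_zero ξ)
  have hr := one_add_mul_conj_mul_lineParam ξ z t
  rw [Phit, div_eq_iff hc]
  simp only [lineEta, map_div₀, map_sub, map_mul, map_pow, map_ofNat, conj_conj,
    conj_ofReal]
  linear_combination (1 - ξ * conj ξ) * hr

/-- The oriented line (ξ,η) ∈ TP¹ passes through the point (z,t) ∈ ℂ ⊕ ℝ = ℝ³
iff η = ½(z − 2tξ − z̄ξ²). -/
theorem stmt18 (ξ η z : ℂ) (t : ℝ) :
    (∃ r : ℝ, Phiz ξ η r = z ∧ Phit ξ η r = (t : ℂ)) ↔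
      η = (z - 2 * (t : ℂ) * ξ - conj z * ξ^2) / 2 := by
  constructor
  · rintro ⟨r, rfl, ht⟩
    rw [← ht]
    exact (lineEta_Phiz_Phit ξ η r).symm
  · rintro rfl
    exact ⟨lineParam ξ z t, Phiz_lineEta_lineParam ξ z t, Phit_lineEta_lineParam ξ z t⟩

end
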